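/- arXiv:1201.0497 — 7 statements merged into one kernel-verified Lean document; each statement's English description precedes it below -/
import Mathlib

section
/- If G is a finitely presented group and H is a finitely generated subgroup of G that is algebraically closed in G, then H is a retract of G. -/
/-- `H` is a retract of `G`: there is an endomorphism of `G` with image `H`
fixing `H` pointwise. -/
def IsRetractOf {G : Type*} [Group G] (H : Subgroup G) : Prop :=
  ∃ φ : G →* G, (∀ g, φ g ∈ H) ∧ ∀ h ∈ H, φ h = h
/-- Evaluation of a word with variables `Fin n` and constants from `H`
at an assignment `x : Fin n → G`. -/
def evalWord {G : Type*} [Group G] (H : Subgroup G) {n : ℕ}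
    (x : Fin n → G) : FreeGroup (Fin n ⊕ H) →* G :=
  FreeGroup.lift (Sum.elim x (fun h => (h : G)))
/-- `H` is algebraically closed in `G`: every finite system of equations with
constants from `H` solvable in `G` is solvable in `H`. -/
def AlgClosedIn {G : Type*} [Group G] (H : Subgroup G) : Prop :=
  ∀ (n m : ℕ) (S : Fin m → FreeGroup (Fin n ⊕ H)),
    (∃ x : Fin n → G, ∀ i, evalWord H x (S i) = 1) →
    (∃ x : Fin n → G, (∀ j, x j ∈ H) ∧ ∀ i, evalWord H x (S i) = 1)

/-- Evaluating a constant-free word equals evaluating via `FreeGroup.lift`. -/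
theorem evalWord_map_inl {G : Type*} [Group G] (H : Subgroup G) {n : ℕ}
    (x : Fin n → G) (v : FreeGroup (Fin n)) :
    evalWord H x (FreeGroup.map Sum.inl v) = FreeGroup.lift x v := by
  have : (evalWord H x).comp (FreeGroup.map Sum.inl) = FreeGroup.lift x := by
    ext i
    simp [evalWord]
  exact congrFun (congrArg (fun f => f.toFun) this) v

/-- If `G` is finitely presented and `H` is a finitely generated subgroup
that is algebraically closed in `G`, then `H` is a retract of `G`. -/
theorem algClosed_retract_of_fp {G : Type*} [Group G]
    (hfp : ∃ (n : ℕ) (φ : FreeGroup (Fin n) →* G) (rels : Finset (FreeGroup (Fin n))),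
      Function.Surjective φ ∧ φ.ker = Subgroup.normalClosure ↑rels)
    (H : Subgroup G) (hfg : H.FG) (hac : AlgClosedIn H) : IsRetractOf H := by
  classical
  obtain ⟨n, φ, rels, hsurj, hker⟩ := hfp
  obtain ⟨T, hT⟩ := hfg
  have hTH : ∀ g ∈ T, g ∈ H := fun g hg => hT ▸ Subgroup.subset_closure hg
  choose w hw using fun t : T => hsurj (t : G)
  -- the system of equations
  set S : Fin (rels.card + T.card) → FreeGroup (Fin n ⊕ H) := Fin.addCases
    (fun i => FreeGroup.map Sum.inl ((rels.equivFin.symm i : FreeGroup (Fin n))))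
    (fun j => FreeGroup.map Sum.inl (w (T.equivFin.symm j)) *
      (FreeGroup.of (Sum.inr
        ⟨((T.equivFin.symm j : T) : G), hTH _ (T.equivFin.symm j).2⟩))⁻¹) with hS
  -- `φ` agrees with lifting the images of the generators
  have hφlift : ∀ v : FreeGroup (Fin n),
      FreeGroup.lift (fun i => φ (FreeGroup.of i)) v = φ v := by
    have : FreeGroup.lift (fun i => φ (FreeGroup.of i)) = φ := by
      ext i
      simp
    exact fun v => congrFun (congrArg (fun f => f.toFun) this) v
  -- the system is solvable in `G`
  have hsolG : ∃ x : Fin n → G, ∀ i, evalWord H x (S i) = 1 := by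
    refine ⟨fun i => φ (FreeGroup.of i), fun i => ?_⟩
    refine Fin.addCases (motive := fun i => evalWord H _ (S i) = 1) ?_ ?_ i
    · intro i
      have hr : ((rels.equivFin.symm i : rels) : FreeGroup (Fin n)) ∈ φ.ker := by
        rw [hker]
        exact Subgroup.subset_normalClosure (rels.equivFin.symm i).2
      simp only [hS, Fin.addCases_left, evalWord_map_inl, hφlift]
      exact hr
    · intro j
      simp only [hS, Fin.addCases_right, map_mul, map_inv, evalWord_map_inl, hφlift]
      rw [hw (T.equivFin.symm j)]
      simp [evalWord]
  obtain ⟨x, hxH, hxS⟩ := hac n (rels.card + T.card) S hsolG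
  set ψ : FreeGroup (Fin n) →* G := FreeGroup.lift x with hψ
  -- consequences of the solution
  have hrel : ∀ r ∈ rels, ψ r = 1 := by
    intro r hr
    have := hxS (Fin.castAdd T.card (rels.equivFin ⟨r, hr⟩))
    simp only [hS, Fin.addCases_left, Equiv.symm_apply_apply, evalWord_map_inl] at this
    exact this
  have hgen : ∀ t : T, ψ (w t) = (t : G) := by
    intro t
    have := hxS (Fin.natAdd rels.card (T.equivFin t))
    simp only [hS, Fin.addCases_right, Equiv.symm_apply_apply, map_mul, map_inv,
      evalWord_map_inl] at this
    have h2 : evalWord H x (FreeGroup.of (Sum.inr ⟨(t : G), hTH _ t.2⟩)) = (t : G) := by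
      simp [evalWord]
    rw [h2] at this
    exact eq_of_div_eq_one (by simpa [div_eq_mul_inv] using this)
  -- kernel containment
  have hkerle : φ.ker ≤ ψ.ker := by
    rw [hker]
    exact Subgroup.normalClosure_le_normal fun r hr => hrel r hr
  -- the retraction
  set φ' : G →* G := (MonoidHom.liftOfSurjective φ hsurj) ⟨ψ, hkerle⟩ with hφ'
  have hcomm : ∀ v : FreeGroup (Fin n), φ' (φ v) = ψ v := fun v =>
    MonoidHom.liftOfRightInverse_comp_apply φ _ _ ⟨ψ, hkerle⟩ v
  -- image lands in `H`
  have hmem : ∀ g, φ' g ∈ H := by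
    intro g
    obtain ⟨v, rfl⟩ := hsurj g
    rw [hcomm]
    have hsub : (H.subtype).comp (FreeGroup.lift fun j => (⟨x j, hxH j⟩ : H))
        = FreeGroup.lift x := by
      ext i
      simp
    show FreeGroup.lift x v ∈ H
    rw [← hsub]
    exact ((FreeGroup.lift fun j => (⟨x j, hxH j⟩ : H)) v).2
  refine ⟨φ', hmem, ?_⟩
  -- fixes `H` pointwise
  intro h hh
  rw [← hT] at hh
  have : Set.EqOn φ' (MonoidHom.id G) (T : Set G) := by
    intro t ht
    have := hcomm (w ⟨t, ht⟩)
    rw [hw ⟨t, ht⟩] at this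
    simpa [this] using hgen ⟨t, ht⟩
  exact MonoidHom.eqOn_closure this hh
end

section
/- If an extension H ≤ G is discriminating, then H is existentially closed in G: every finite system of equations and inequations with constants in H that has a solution in G has a solution in H. -/
/-- The extension `H ≤ G` is discriminating: for every finite subset `K ⊆ G`
there is a retraction `G → H` injective on `K`. -/
def Discriminating {G : Type*} [Group G] (H : Subgroup G) : Prop :=
  ∀ K : Finset G, ∃ φ : G →* G,
    (∀ g, φ g ∈ H) ∧ (∀ h ∈ H, φ h = h) ∧ Set.InjOn φ ↑K

/-- `H` is existentially closed in `G`: every finite system of equations and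
inequations with constants in `H` solvable in `G` is solvable in `H`. -/
def ExistClosedIn {G : Type*} [Group G] (H : Subgroup G) : Prop :=
  ∀ (n m m' : ℕ) (S : Fin m → FreeGroup (Fin n ⊕ H))
    (T : Fin m' → FreeGroup (Fin n ⊕ H)),
    (∃ x : Fin n → G, (∀ i, evalWord H x (S i) = 1) ∧ (∀ j, evalWord H x (T j) ≠ 1)) →
    (∃ x : Fin n → G, (∀ k, x k ∈ H) ∧
      (∀ i, evalWord H x (S i) = 1) ∧ (∀ j, evalWord H x (T j) ≠ 1))

/-- A discriminating extension is existentially closed. -/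
theorem discriminating_existClosed {G : Type*} [Group G] (H : Subgroup G)
    (hd : Discriminating H) : ExistClosedIn H := by
  classical
  intro n m m' S T ⟨x, hS, hT⟩
  obtain ⟨φ, hmem, hfix, hinj⟩ := hd (insert 1 (Finset.image (fun j => evalWord H x (T j)) Finset.univ))
  have key : ∀ w : FreeGroup (Fin n ⊕ H), evalWord H (φ ∘ x) w = φ (evalWord H x w) := by
    intro w
    have : (evalWord H (φ ∘ x) : FreeGroup (Fin n ⊕ H) →* G) = φ.comp (evalWord H x) := by
      apply FreeGroup.ext_hom
      rintro (i | h)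
      · simp [evalWord]
      · simp [evalWord, hfix h h.2]
    exact DFunLike.congr_fun this w
  refine ⟨φ ∘ x, fun k => hmem (x k), fun i => by rw [key, hS i, map_one], fun j hj => ?_⟩
  rw [key] at hj
  apply hT j
  apply hinj
  · simp
  · simp
  · rw [hj, map_one]
end

section
/- The property of being an algebraically closed subgroup is transitive: if H is algebraically closed in K and K is algebraically closed in G (with H ≤ K ≤ G), then H is algebraically closed in G. -/
section aux

variable {G : Type*} [Group G] (H K : Subgroup G) (hHK : H ≤ K) {n : ℕ}

/-- Reinterpret constants from `H` as constants from `K`. -/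
def toKWord : FreeGroup (Fin n ⊕ H) →* FreeGroup (Fin n ⊕ K) :=
  FreeGroup.map (Sum.map id (Set.inclusion hHK))

/-- Reinterpret constants from `H` as constants from `H.subgroupOf K`. -/
def toSubWord : FreeGroup (Fin n ⊕ H) →* FreeGroup (Fin n ⊕ (H.subgroupOf K)) :=
  FreeGroup.map (Sum.map id (fun h => ⟨⟨(h : G), hHK h.2⟩, h.2⟩))

lemma evalWord_toKWord (x : Fin n → G) (w : FreeGroup (Fin n ⊕ H)) :
    evalWord K x (toKWord H K hHK w) = evalWord H x w := by
  show ((evalWord K x).comp (toKWord H K hHK)) w = evalWord H x w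
  congr 1
  apply FreeGroup.ext_hom
  rintro (i | h) <;> simp [evalWord, toKWord]

lemma evalWord_toSubWord (z : Fin n → K) (w : FreeGroup (Fin n ⊕ H)) :
    (evalWord (H.subgroupOf K) z (toSubWord H K hHK w) : G)
      = evalWord H (fun j => ((z j : K) : G)) w := by
  show (K.subtype.comp ((evalWord (H.subgroupOf K) z).comp (toSubWord H K hHK))) w
      = evalWord H (fun j => ((z j : K) : G)) w
  congr 1
  apply FreeGroup.ext_hom
  rintro (i | h) <;> simp [evalWord, toSubWord]

end aux

/-- Being an algebraically closed subgroup is transitive. -/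
theorem algClosed_trans {G : Type*} [Group G] (H K : Subgroup G) (hHK : H ≤ K)
    (h1 : AlgClosedIn (H.subgroupOf K)) (h2 : AlgClosedIn K) :
    AlgClosedIn H := by
  intro n m S ⟨x, hx⟩
  -- Step 1: solve in K using h2
  obtain ⟨x', hx'K, hx'⟩ := h2 n m (fun i => toKWord H K hHK (S i))
    ⟨x, fun i => by rw [evalWord_toKWord]; exact hx i⟩
  -- package x' as a map into K
  set y : Fin n → K := fun j => ⟨x' j, hx'K j⟩ with hy
  -- Step 2: solve in H.subgroupOf K using h1
  obtain ⟨z, hzH, hz⟩ := h1 n m (fun i => toSubWord H K hHK (S i))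
    ⟨y, fun i => by
      apply Subtype.ext
      rw [evalWord_toSubWord H K hHK y (S i)]
      rw [show (fun j => ((y j : K) : G)) = x' from rfl,
        ← evalWord_toKWord H K hHK x' (S i), hx' i]; rfl⟩
  refine ⟨fun j => ((z j : K) : G), fun j => hzH j, fun i => ?_⟩
  rw [← evalWord_toSubWord H K hHK z (S i), hz i]
  simp
end

section
/- Let F_r be a free group of rank r and let H = ⟨h⟩ be a cyclic subgroup generated by a nontrivial element h. If the image of h in the abelianization F_r/[F_r,F_r] is a primitive element (i.e., part of a basis of the free abelian group ℤ^r), then H is a retract of F_r. -/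
/-- The exponent sum of the `i`-th generator in an element of the free group. -/
noncomputable def expSum {r : ℕ} (i : Fin r) (h : FreeGroup (Fin r)) : ℤ :=
  Multiplicative.toAdd
    (FreeGroup.lift (fun j => Multiplicative.ofAdd (if j = i then (1 : ℤ) else 0)) h)

/-! By Bézout, gcd 1 gives integers `c i` with `∑ c i * expSum i h = 1`. The homomorphism
`ε : F_r → ℤ` sending `f i` to `c i` therefore maps `h` to `1`, and `g ↦ h ^ ε g` is a
retraction onto `⟨h⟩`. -/

theorem isRetractOf_zpowers_of_map_eq_ofAdd_one {G : Type*} [Group G] {h : G}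
    (ε : G →* Multiplicative ℤ) (hε : ε h = Multiplicative.ofAdd 1) :
    IsRetractOf (Subgroup.zpowers h) := by
  refine ⟨(zpowersHom G h).comp ε, fun g => ⟨Multiplicative.toAdd (ε g), rfl⟩, ?_⟩
  rintro _ ⟨n, rfl⟩
  simp [hε]

theorem toAdd_lift_ofAdd_eq_sum_expSum_mul {r : ℕ} (c : Fin r → ℤ) (g : FreeGroup (Fin r)) :
    Multiplicative.toAdd (FreeGroup.lift (fun j => Multiplicative.ofAdd (c j)) g) =
      ∑ i, expSum i g * c i := by
  induction g using FreeGroup.induction_on with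
  | C1 => simp [expSum]
  | of j => simp [expSum]
  | inv_of j ih => simp [expSum] at ih ⊢
  | mul x y hx hy =>
    rw [map_mul, toAdd_mul, hx, hy, ← Finset.sum_add_distrib]
    simp [expSum, add_mul]

theorem cyclic_retract_of_primitive_general {r : ℕ} (h : FreeGroup (Fin r))
    (hprim : Finset.univ.gcd (fun i => expSum i h) = 1) :
    IsRetractOf (Subgroup.zpowers h) := by
  obtain ⟨c, hc⟩ := Finset.univ.gcd_eq_sum_mul (fun i => expSum i h)
  refine isRetractOf_zpowers_of_map_eq_ofAdd_one
    (FreeGroup.lift fun j => Multiplicative.ofAdd (c j)) ?_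
  rw [← toAdd_lift_ofAdd_eq_sum_expSum_mul, hprim] at hc
  exact congrArg Multiplicative.ofAdd hc.symm

/-- If the image of `h ≠ 1` in the abelianization of the free group `F_r` is
primitive (the exponent sums have gcd `1`), then `⟨h⟩` is a retract of `F_r`. -/
theorem cyclic_retract_of_primitive {r : ℕ} (h : FreeGroup (Fin r)) (hne : h ≠ 1)
    (hprim : Finset.univ.gcd (fun i => expSum i h) = 1) :
    IsRetractOf (Subgroup.zpowers h) :=
  cyclic_retract_of_primitive_general h hprim
end

section
/- Let F_r be a free group of rank r and h ∈ F_r a nontrivial element whose image in the abelianization F_r/[F_r,F_r] is not primitive (i.e., h ∈ [F_r,F_r], or h ≡ f₁^{k₁}···f_r^{k_r} with gcd(k₁,…,k_r) = d > 1). Then the cyclic subgroup ⟨h⟩ is not verbally closed in F_r. -/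
/-!
View `h` itself as a word in `r` variables: it has the solution `xᵢ = fᵢ` in `F_r`. A solution
inside `⟨h⟩`, say `xᵢ = h ^ mᵢ`, evaluates the word to `h ^ ∑ mᵢ kᵢ`, where `kᵢ` are the exponent
sums of `h`. Since `F_r` is torsion-free and `h ≠ 1`, this forces `∑ mᵢ kᵢ = 1`, so the `kᵢ` have
gcd `1`, i.e. the image of `h` in `ℤ^r` is primitive.
-/

/-- `H` is verbally closed in `G`: for every word `w` and `h ∈ H`, if the
equation `w(x₁,…,xₙ) = h` has a solution in `G` then it has one in `H`. -/
def VerballyClosedIn {G : Type*} [Group G] (H : Subgroup G) : Prop :=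
  ∀ (n : ℕ) (w : FreeGroup (Fin n)) (h : G), h ∈ H →
    (∃ x : Fin n → G, FreeGroup.lift x w = h) →
    (∃ x : Fin n → G, (∀ j, x j ∈ H) ∧ FreeGroup.lift x w = h)
theorem Finset.gcd_eq_one_of_sum_mul_eq_one {ι α : Type*} [CommRing α] [IsDomain α]
    [NormalizedGCDMonoid α] {s : Finset ι} {f m : ι → α} (h : ∑ i ∈ s, m i * f i = 1) :
    s.gcd f = 1 := by
  rw [← Finset.normalize_gcd, normalize_eq_one]
  exact isUnit_of_dvd_one (h ▸ Finset.dvd_sum fun i hi => (Finset.gcd_dvd hi).mul_left _)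

theorem IsMulTorsionFree.zpow_eq_self_iff {G : Type*} [Group G] [IsMulTorsionFree G] {a : G}
    {n : ℤ} (ha : a ≠ 1) : a ^ n = a ↔ n = 1 := by
  rw [← sub_eq_zero (a := n), ← IsMulTorsionFree.zpow_eq_one_iff_right ha, zpow_sub_one,
    mul_inv_eq_one]

section expSum

variable {r : ℕ}

@[simp]
theorem expSum_of (i j : Fin r) : expSum i (FreeGroup.of j) = if j = i then 1 else 0 := by
  simp [expSum]

@[simp]
theorem expSum_mul (i : Fin r) (a b : FreeGroup (Fin r)) :
    expSum i (a * b) = expSum i a + expSum i b := by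
  simp [expSum]

@[simp]
theorem expSum_inv (i : Fin r) (a : FreeGroup (Fin r)) : expSum i a⁻¹ = -expSum i a := by
  simp [expSum]

theorem lift_zpow_eq_zpow_sum_mul_expSum {G : Type*} [Group G] (g : G) (m : Fin r → ℤ)
    (w : FreeGroup (Fin r)) :
    FreeGroup.lift (fun j => g ^ m j) w = g ^ ∑ i, m i * expSum i w := by
  induction w using FreeGroup.induction_on with
  | C1 => simp [expSum]
  | of j => simp
  | inv_of j ih => simp [ih, Finset.sum_neg_distrib, zpow_neg]
  | mul a b iha ihb => simp [iha, ihb, mul_add, Finset.sum_add_distrib, zpow_add]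

end expSum

/-- If the image of `h ≠ 1` in the abelianization of `F_r` is not primitive
(the exponent sums have gcd `≠ 1`), then `⟨h⟩` is not verbally closed in `F_r`. -/
theorem cyclic_not_verballyClosed_of_not_primitive {r : ℕ}
    (h : FreeGroup (Fin r)) (hne : h ≠ 1)
    (hprim : Finset.univ.gcd (fun i => expSum i h) ≠ 1) :
    ¬ VerballyClosedIn (Subgroup.zpowers h) := by
  intro hVC
  obtain ⟨x, hx_mem, hx⟩ :=
    hVC r h h (Subgroup.mem_zpowers h) ⟨FreeGroup.of, FreeGroup.lift_of_apply h⟩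
  choose m hm using fun j => Subgroup.mem_zpowers_iff.mp (hx_mem j)
  have hpow : h ^ ∑ i, m i * expSum i h = h := by
    rw [← lift_zpow_eq_zpow_sum_mul_expSum, funext hm, hx]
  exact hprim <|
    Finset.gcd_eq_one_of_sum_mul_eq_one ((IsMulTorsionFree.zpow_eq_self_iff hne).mp hpow)
end

section
/- Every verbally closed subgroup H of a free group F_r of finite rank r has rank at most r (in particular, H is finitely generated). -/
universe u v

open Cardinal Function

namespace VerballyClosedIn

variable {G : Type*} [Group G] {H : Subgroup G}

theorem lift_mem_commutator (hH : VerballyClosedIn H) {n : ℕ} {w : FreeGroup (Fin n)}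
    (hw : w ∈ commutator (FreeGroup (Fin n))) {x : Fin n → G} (hx : FreeGroup.lift x w ∈ H) :
    FreeGroup.lift x w ∈ ⁅H, H⁆ := by
  obtain ⟨u, huH, hu⟩ := hH n w _ hx ⟨x, rfl⟩
  have hrange : (FreeGroup.lift u).range ≤ H :=
    FreeGroup.range_lift_le (Set.range_subset_iff.2 huH)
  have hmem : FreeGroup.lift u w ∈ ⁅(FreeGroup.lift u).range, (FreeGroup.lift u).range⁆ := by
    rw [MonoidHom.range_eq_map, ← Subgroup.map_commutator, ← commutator_def]
    exact Subgroup.mem_map_of_mem _ hw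
  exact hu ▸ Subgroup.commutator_mono hrange hrange hmem

theorem inf_commutator_le {n : ℕ} {H : Subgroup (FreeGroup (Fin n))} (hH : VerballyClosedIn H) :
    H ⊓ commutator (FreeGroup (Fin n)) ≤ ⁅H, H⁆ := by
  rintro w ⟨hwH, hw⟩
  rw [← FreeGroup.lift_of_apply w] at hwH ⊢
  exact hH.lift_mem_commutator hw hwH

end VerballyClosedIn

theorem Abelianization.map_subtype_injective {G : Type*} [Group G] {H : Subgroup G}
    (hH : H ⊓ commutator G ≤ ⁅H, H⁆) : Injective (Abelianization.map H.subtype) := by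
  rw [injective_iff_map_eq_one]
  intro a ha
  induction a using QuotientGroup.induction_on with | H x => ?_
  have hx : (x : G) ∈ commutator G := by
    rw [← Abelianization.ker_of]; exact ha
  obtain ⟨y, hy, hyx⟩ : (x : G) ∈ (commutator H).map H.subtype := by
    rw [H.map_subtype_commutator]; exact hH ⟨x.2, hx⟩
  rw [← Subtype.ext hyx]
  exact (QuotientGroup.eq_one_iff y).2 hy

theorem FreeAbelianGroup.lift_mk_le_lift_mk_of_injective {ι : Type u} {κ : Type v}
    (f : FreeAbelianGroup ι →+ FreeAbelianGroup κ) (hf : Injective f) :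
    Cardinal.lift.{v} #ι ≤ Cardinal.lift.{u} #κ := by
  rw [(FreeAbelianGroup.basis ι).mk_eq_rank'', (FreeAbelianGroup.basis κ).mk_eq_rank'']
  exact LinearMap.lift_rank_le_of_injective f.toIntLinearMap hf

theorem Subgroup.exists_finset_card_le_closure_eq {G : Type*} [Group G] (H : Subgroup G)
    {ι : Type*} {r : ℕ} (f : FreeGroup ι →* H) (hf : Surjective f) (hι : #ι ≤ r) :
    ∃ S : Finset G, S.card ≤ r ∧ Subgroup.closure (S : Set G) = H := by
  classical
  have : Finite ι := lt_aleph0_iff_finite.1 (hι.trans_lt natCast_lt_aleph0)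
  have : Fintype ι := Fintype.ofFinite ι
  refine ⟨Finset.univ.image (H.subtype.comp f ∘ FreeGroup.of), ?_, ?_⟩
  · refine Finset.card_image_le.trans ?_
    rw [Finset.card_univ, ← Nat.cast_le (α := Cardinal), ← mk_fintype]
    exact hι
  · rw [Finset.coe_image, Finset.coe_univ, Set.image_univ, Set.range_comp,
      ← MonoidHom.map_closure, FreeGroup.closure_range_of, ← MonoidHom.range_eq_map,
      MonoidHom.range_comp, MonoidHom.range_eq_top.2 hf, ← MonoidHom.range_eq_map, H.range_subtype]

/-- Every verbally closed subgroup of a free group of rank `r` can be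
generated by at most `r` elements (i.e., has rank at most `r`). -/
theorem verballyClosed_rank_le {r : ℕ} (H : Subgroup (FreeGroup (Fin r)))
    (hvc : VerballyClosedIn H) :
    ∃ S : Finset (FreeGroup (Fin r)), S.card ≤ r ∧ Subgroup.closure ↑S = H := by
  -- the `IsFreeGroup H` instance is Mathlib's Nielsen–Schreier theorem
  let e : FreeGroup (IsFreeGroup.Generators H) ≃* H := (IsFreeGroup.toFreeGroup H).symm
  let φ : FreeAbelianGroup (IsFreeGroup.Generators H) →+ FreeAbelianGroup (Fin r) :=
    MonoidHom.toAdditive ((Abelianization.map H.subtype).comp e.abelianizationCongr.toMonoidHom)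
  have hφ : Injective φ :=
    (Abelianization.map_subtype_injective hvc.inf_commutator_le).comp
      e.abelianizationCongr.injective
  have hrank : #(IsFreeGroup.Generators H) ≤ r := by
    simpa using FreeAbelianGroup.lift_mk_le_lift_mk_of_injective φ hφ
  exact H.exists_finset_card_le_closure_eq e.toMonoidHom e.surjective hrank
end

section
/- Every element g of the derived subgroup [N,N] of a free nilpotent group N of rank r with basis {z₁,…,z_r} can be written as a product of r commutators of the special form g = [g₁,z₁]···[g_r,z_r] for some g₁,…,g_r ∈ N. -/
/-!
Induction on the nilpotency class. Modulo the last nonzero term `γ = ⁅H, ⊤⁆` of the lower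
central series, a special product representing `g` exists by induction and lifts; the error lies
in the central subgroup `γ`. Since `γ` is central, `u ↦ ⁅u, x⁆` on `H` and `x ↦ ⁅u, x⁆` for
`u ∈ H` are homomorphisms, so the special products `∏ ⁅u i, z i⁆` with `u i ∈ H` form a subgroup;
it contains every `⁅u, z i⁆`, hence every `⁅u, x⁆` because the `z i` generate, hence all of `γ`.
The error `∏ ⁅u i, z i⁆` is absorbed by replacing `a i` with `a i * u i`.
-/

open Subgroup
open scoped commutatorElement

section

variable {G : Type*} [Group G]

theorem commutatorElement_mul_left_of_mem_center {u v x : G} (hv : ⁅v, x⁆ ∈ center G) :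
    ⁅u * v, x⁆ = ⁅u, x⁆ * ⁅v, x⁆ := by
  rw [commutatorElement_mul_left_eq_conj_mul, mem_center_iff.mp hv u, mul_inv_cancel_right,
    (mem_center_iff.mp hv _).symm]

theorem commutatorElement_mul_right_of_mem_center {u y w : G} (hw : ⁅u, w⁆ ∈ center G) :
    ⁅u, y * w⁆ = ⁅u, y⁆ * ⁅u, w⁆ := by
  rw [commutatorElement_mul_right_eq_mul_conj, mul_assoc _ y, mem_center_iff.mp hw y,
    mul_assoc, mul_inv_cancel_right]

theorem List.prod_ofFn_mul_of_mem_center {n : ℕ} (f g : Fin n → G) (hg : ∀ i, g i ∈ center G) :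
    (List.ofFn (f * g)).prod = (List.ofFn f).prod * (List.ofFn g).prod := by
  induction n with
  | zero => simp
  | succ n ih =>
    simp only [List.ofFn_succ, List.prod_cons, Pi.mul_apply]
    rw [← Pi.mul_def, ih _ _ fun i => hg i.succ, mul_assoc, mul_assoc,
      ← mul_assoc (g 0), ← mem_center_iff.mp (hg 0), mul_assoc]

theorem List.prod_ofFn_mulSingle {n : ℕ} (i : Fin n) (x : G) :
    (List.ofFn (Pi.mulSingle i x)).prod = x := by
  induction n with
  | zero => exact i.elim0
  | succ n ih =>
    rw [List.ofFn_succ, List.prod_cons]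
    cases i using Fin.cases with
    | zero => simp [Fin.succ_ne_zero]
    | succ j =>
      have : (fun k => (Pi.mulSingle j.succ x : Fin (n + 1) → G) k.succ) = Pi.mulSingle j x := by
        ext k; simp [Pi.mulSingle_apply]
      simp [Fin.succ_ne_zero, this, ih]

variable {r : ℕ} (z : Fin r → G)

def specialCommProd (a : Fin r → G) : G :=
  (List.ofFn fun i => ⁅a i, z i⁆).prod

theorem specialCommProd_mul {a b : Fin r → G} (hb : ∀ i, ⁅b i, z i⁆ ∈ center G) :
    specialCommProd z (a * b) = specialCommProd z a * specialCommProd z b := by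
  rw [specialCommProd, specialCommProd, specialCommProd,
    ← List.prod_ofFn_mul_of_mem_center _ _ hb]
  exact congrArg _ (congrArg _ (funext fun i => commutatorElement_mul_left_of_mem_center (hb i)))

theorem specialCommProd_mulSingle (i : Fin r) (u : G) :
    specialCommProd z (Pi.mulSingle i u) = ⁅u, z i⁆ := by
  rw [specialCommProd, ← List.prod_ofFn_mulSingle i ⁅u, z i⁆]
  exact congrArg _ (congrArg _ (funext (Pi.apply_mulSingle (fun j x => ⁅x, z j⁆)
    (fun _ => commutatorElement_one_left _) i u)))

theorem map_specialCommProd {H : Type*} [Group H] (f : G →* H) (a : Fin r → G) :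
    f (specialCommProd z a) = specialCommProd (f ∘ z) (f ∘ a) := by
  simp [specialCommProd, map_list_prod, List.map_ofFn, Function.comp_def, map_commutatorElement]

theorem closure_range_comp_eq_top {H : Type*} [Group H] {z : Fin r → G}
    (hz : closure (Set.range z) = ⊤) {f : G →* H} (hf : Function.Surjective f) :
    closure (Set.range (f ∘ z)) = ⊤ := by
  rw [Set.range_comp, ← MonoidHom.map_closure, hz, map_top_of_surjective f hf]

theorem top_lowerCentralSeries_quotient_eq_bot (c : ℕ) :
    (⊤ : Subgroup (G ⧸ (⊤ : Subgroup G).lowerCentralSeries c)).lowerCentralSeries c = ⊥ := by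
  rw [← map_top_of_surjective _ (QuotientGroup.mk'_surjective _), ← map_lowerCentralSeries,
    QuotientGroup.map_mk'_self]

theorem exists_specialCommProd_eq_of_mem_commutator (hz : closure (Set.range z) = ⊤)
    {H : Subgroup G} (hH : ⁅H, (⊤ : Subgroup G)⁆ ≤ center G) {w : G}
    (hw : w ∈ ⁅H, (⊤ : Subgroup G)⁆) :
    ∃ u : Fin r → G, (∀ i, u i ∈ H) ∧ specialCommProd z u = w := by
  have hcentral : ∀ u ∈ H, ∀ x, ⁅u, x⁆ ∈ center G :=
    fun u hu x => hH (commutator_mem_commutator hu (mem_top x))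
  let Φ : (Fin r → H) →* G := MonoidHom.mk' (fun u => specialCommProd z fun i => u i)
    fun u v => specialCommProd_mul z fun i => hcentral _ (v i).2 _
  suffices ⁅H, (⊤ : Subgroup G)⁆ ≤ Φ.range by
    obtain ⟨u, rfl⟩ := this hw
    exact ⟨fun i => u i, fun i => (u i).2, rfl⟩
  refine commutator_le.mpr fun u hu y _ => ?_
  let χ : G →* G := MonoidHom.mk' (fun y => ⁅u, y⁆)
    fun y w => commutatorElement_mul_right_of_mem_center (hcentral u hu w)
  suffices closure (Set.range z) ≤ Φ.range.comap χ from this (hz ▸ mem_top y)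
  rw [closure_le]
  rintro _ ⟨i, rfl⟩
  refine ⟨Pi.mulSingle i ⟨u, hu⟩, ?_⟩
  have : (fun j => ((Pi.mulSingle i ⟨u, hu⟩ : Fin r → H) j : G)) = Pi.mulSingle i u :=
    funext (Pi.apply_mulSingle (fun _ => Subtype.val) (fun _ => rfl) i _)
  exact (congrArg (specialCommProd z) this).trans (specialCommProd_mulSingle z i u)

theorem exists_specialCommProd_eq_of_lowerCentralSeries_eq_bot {c : ℕ}
    (hz : closure (Set.range z) = ⊤) (hG : (⊤ : Subgroup G).lowerCentralSeries (c + 1) = ⊥)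
    {g : G} (hg : g ∈ commutator G) : ∃ a : Fin r → G, specialCommProd z a = g := by
  induction c generalizing G with
  | zero =>
    rw [← top_lowerCentralSeries_one, hG, mem_bot] at hg
    exact ⟨1, by simp [specialCommProd, hg]⟩
  | succ c ih =>
    let π := QuotientGroup.mk' ((⊤ : Subgroup G).lowerCentralSeries (c + 1))
    have hπ : Function.Surjective π := QuotientGroup.mk'_surjective _
    obtain ⟨b, hb⟩ := ih (π ∘ z) (closure_range_comp_eq_top hz hπ)
      (top_lowerCentralSeries_quotient_eq_bot (c + 1))
      ((map_commutator_eq _ π).trans_le (commutator_mono le_top le_top) (mem_map_of_mem π hg))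
    choose a ha using fun i => hπ (b i)
    have hπa : π (specialCommProd z a) = π g := by
      rw [map_specialCommProd, show π ∘ a = b from funext ha, hb]
    have hcentral := commutator_top_right_eq_bot_iff_le_center.mp hG
    obtain ⟨u, hu, hw⟩ :=
      exists_specialCommProd_eq_of_mem_commutator z hz hcentral (QuotientGroup.eq.mp hπa)
    refine ⟨a * u, ?_⟩
    rw [specialCommProd_mul z fun i => hcentral (commutator_mem_commutator (hu i) (mem_top _)),
      hw, mul_inv_cancel_left]

end

/-- In the free nilpotent group `N = F_r/γ_{c+1}F_r` of rank `r` and class `c`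
(`lowerCentralSeries _ c` is `γ_{c+1}` in the paper's 1-indexed notation),
with `z i` the images of the free generators, every element of the derived
subgroup is a product `⁅g₁,z₁⁆⋯⁅g_r,z_r⁆` of `r` special commutators. -/
theorem freeNilpotent_derived_commutator_width (r c : ℕ) :
    ∀ g ∈ commutator (FreeGroup (Fin r) ⧸ (⊤ : Subgroup (FreeGroup (Fin r))).lowerCentralSeries c),
      ∃ a : Fin r → FreeGroup (Fin r) ⧸ (⊤ : Subgroup (FreeGroup (Fin r))).lowerCentralSeries c,
        g = (List.ofFn (fun i =>
          ⁅a i, (QuotientGroup.mk (FreeGroup.of i) :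
            FreeGroup (Fin r) ⧸ (⊤ : Subgroup (FreeGroup (Fin r))).lowerCentralSeries c)⁆)).prod := by
  intro g hg
  let π := QuotientGroup.mk' ((⊤ : Subgroup (FreeGroup (Fin r))).lowerCentralSeries c)
  have hz : closure (Set.range (π ∘ FreeGroup.of)) = ⊤ :=
    closure_range_comp_eq_top (FreeGroup.closure_range_of _) (QuotientGroup.mk'_surjective _)
  have hN : (⊤ : Subgroup (FreeGroup (Fin r) ⧸ _)).lowerCentralSeries (c + 1) = ⊥ :=
    le_bot_iff.mp ((Subgroup.lowerCentralSeries_antitone _ c.le_succ).trans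
      (top_lowerCentralSeries_quotient_eq_bot c).le)
  obtain ⟨a, ha⟩ := exists_specialCommProd_eq_of_lowerCentralSeries_eq_bot _ hz hN hg
  exact ⟨a, ha.symm⟩
end
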